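/- Let w ∈ αΣ* ∩ Σ*‾α be a non-α-crossing (m,n)-word with m, n ≥ 2, with α-prefixes u₀ <_p ⋯ <_p u_{m−1} and ‾α-suffixes ‾v₀, …, ‾v_{n−1} with ‾v_{n−1} >_s ⋯ >_s ‾v₀. If u₁ = v₁, then H*_α(w) ⊆ u₁αΣ* ∩ Σ*‾α‾u₁. -/

import Mathlib

/-!
Let `u` be the least nonempty `α`-prefix of a word `z`, i.e. `α` and `uα` are prefixes of `z` and
every other nonempty `α`-prefix of `z` extends `u`. This property survives right hairpin
completion `z ↦ z ‾γ` of `z = γ α β ‾α`: appending cannot create short `α`-prefixes, and on the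
other side `γ` is itself an `α`-prefix, so `γ = ε` or `u ≤_p γ`; an occurrence of `α` in `γ ‾z`
starting inside `γ` already occurs in `γ α ≤_p z`, while one starting after `γ` extends `γ`.
Imposing the property on both `z` and `‾z` gives an invariant symmetric under `‾`, hence also
preserved by left completions. For `w` it holds with `u = u₁ = v₁`.
-/

open List

namespace Hairpin

variable {S : Type} [DecidableEq S]

/-- Antimorphic extension of an involution to words. -/
def comp (bar : S → S) (w : List S) : List S := (w.map bar).reverse

/-- Right hairpin completion w.r.t. primer `a`. -/
def RH (bar : S → S) (a w z : List S) : Prop :=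
  ∃ γ β : List S, w = γ ++ a ++ β ++ comp bar a ∧ z = w ++ comp bar γ

/-- Left hairpin completion w.r.t. primer `a`. -/
def LH (bar : S → S) (a w z : List S) : Prop :=
  ∃ γ β : List S, w = a ++ β ++ comp bar a ++ comp bar γ ∧ z = γ ++ w

/-- One hairpin completion step. -/
def HC (bar : S → S) (a w z : List S) : Prop := RH bar a w z ∨ LH bar a w z

/-- Iterated hairpin completion `H*_α(w)`. -/
def HCstar (bar : S → S) (a w : List S) : Set (List S) :=
  { z | Relation.ReflTransGen (HC bar a) w z }

/-- `w` is non-`a`-crossing: every occurrence of `a` starts no later than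
every occurrence of `comp bar a`. -/
def NonCrossing (bar : S → S) (a w : List S) : Prop :=
  ∀ i j : ℕ, a <+: w.drop i → comp bar a <+: w.drop j → i ≤ j

/-- The set of `a`-prefixes of `w`. -/
def Pa (a w : List S) : Set (List S) := { u | u ++ a <+: w }

/-- The set of `‾a`-suffixes of `w` (the elements are the words `‾v`). -/
def Sa (bar : S → S) (a w : List S) : Set (List S) :=
  { x | comp bar a ++ x <:+ w }

/-- The set of complements of `‾a`-suffixes of `w`, i.e. `‾(S_‾α(w))`. -/
def barSa (bar : S → S) (a w : List S) : Set (List S) :=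
  { v | comp bar a ++ comp bar v <:+ w }

/-- Kleene star of a set of words: all finite concatenations. -/
def star (X : Set (List S)) : Set (List S) :=
  { x | ∃ l : List (List S), (∀ y ∈ l, y ∈ X) ∧ x = l.flatten }

/-- `ind_α(x)`: the number of occurrences of `a` in `x ++ a` other than the
suffix occurrence, i.e. the number of positions `i < |x|` where `a` occurs. -/
def inda (a x : List S) : ℕ :=
  ((Finset.range x.length).filter (fun i => a <+: (x ++ a).drop i)).card

end Hairpin

namespace Hairpin

variable {S : Type} {bar : S → S}

lemma comp_append (x y : List S) : comp bar (x ++ y) = comp bar y ++ comp bar x := by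
  simp [comp]

lemma comp_comp (hbar : Function.Involutive bar) (x : List S) : comp bar (comp bar x) = x := by
  simp [comp, hbar.comp_self]

lemma comp_injective (hbar : Function.Involutive bar) : Function.Injective (comp bar) :=
  Function.LeftInverse.injective (comp_comp hbar)

lemma prefix_comp_iff (hbar : Function.Involutive bar) {x y : List S} :
    x <+: comp bar y ↔ comp bar x <:+ y := by
  constructor
  · rintro ⟨t, ht⟩
    rw [← comp_comp hbar y, ← ht, comp_append]
    exact suffix_append _ _
  · rintro ⟨t, rfl⟩
    rw [comp_append, comp_comp hbar]
    exact prefix_append _ _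

lemma mem_Pa_comp_iff (hbar : Function.Involutive bar) {a w g : List S} :
    g ∈ Pa a (comp bar w) ↔ comp bar g ∈ Sa bar a w := by
  show g ++ a <+: comp bar w ↔ comp bar a ++ comp bar g <:+ w
  rw [prefix_comp_iff hbar, comp_append]

lemma Pa_comp_eq_range (hbar : Function.Involutive bar) {a w : List S} {n : ℕ}
    {v : Fin n → List S} (hSv : Sa bar a w = Set.range (fun i => comp bar (v i))) :
    Pa a (comp bar w) = Set.range v := by
  ext g
  simp only [mem_Pa_comp_iff hbar, hSv, Set.mem_range, (comp_injective hbar).eq_iff]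

def IsLeastNonemptyPa (a u z : List S) : Prop :=
  [] ∈ Pa a z ∧ u ∈ Pa a z ∧ ∀ g ∈ Pa a z, g = [] ∨ u <+: g

lemma isLeastNonemptyPa_of_range {a z : List S} {m : ℕ} (u : Fin m → List S)
    (hchain : ∀ i j : Fin m, i < j → u i <+: u j) (hPu : Pa a z = Set.range u)
    (hnil : [] ∈ Pa a z) (hm : 1 < m) : IsLeastNonemptyPa a (u ⟨1, hm⟩) z := by
  have hu0 : u ⟨0, by omega⟩ = [] := by
    obtain ⟨j, hj⟩ : [] ∈ Set.range u := hPu ▸ hnil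
    by_cases hj0 : j = ⟨0, by omega⟩
    · rwa [hj0] at hj
    · have hlt : (⟨0, by omega⟩ : Fin m) < j := by
        rw [Fin.lt_def]
        exact Nat.pos_of_ne_zero fun h => hj0 (Fin.ext h)
      exact prefix_nil.mp (hj ▸ hchain _ _ hlt)
  refine ⟨hnil, hPu ▸ ⟨_, rfl⟩, ?_⟩
  rintro g hg
  obtain ⟨i, rfl⟩ : g ∈ Set.range u := hPu ▸ hg
  rcases lt_trichotomy i ⟨1, hm⟩ with hi | rfl | hi
  · rw [show i = ⟨0, by omega⟩ from Fin.ext (Nat.lt_one_iff.mp hi)]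
    exact Or.inl hu0
  · exact Or.inr (prefix_refl _)
  · exact Or.inr (hchain _ _ hi)

namespace IsLeastNonemptyPa

variable {a u z : List S}

lemma append (hz : IsLeastNonemptyPa a u z) (t : List S) : IsLeastNonemptyPa a u (z ++ t) := by
  obtain ⟨hnil, hu, hmin⟩ := hz
  refine ⟨hnil.trans (prefix_append _ _), hu.trans (prefix_append _ _), fun g hg => ?_⟩
  by_cases hlen : (g ++ a).length ≤ z.length
  · exact hmin g (prefix_of_prefix_length_le hg (prefix_append _ _) hlen)
  · have hlen_u := hu.length_le
    simp only [length_append] at hlen hlen_u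
    exact Or.inr (prefix_of_prefix_length_le ((prefix_append _ _).trans (hu.trans
      (prefix_append _ _))) ((prefix_append _ _).trans hg) (by omega))

lemma prepend (hz : IsLeastNonemptyPa a u z) {γ y : List S} (hγ : γ ++ a <+: z)
    (hγu : u <+: γ) (hy : a <+: y) : IsLeastNonemptyPa a u (γ ++ y) := by
  obtain ⟨hnil, hu, hmin⟩ := hz
  have hγy : γ ++ a <+: γ ++ y := (prefix_append_right_inj γ).mpr hy
  have hlen := hγu.length_le
  refine ⟨?_, ?_, fun g hg => ?_⟩
  · exact (prefix_of_prefix_length_le hnil hγ (by simp)).trans hγy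
  · exact (prefix_of_prefix_length_le hu hγ (by simpa using hlen)).trans hγy
  by_cases hg_short : g.length ≤ γ.length
  -- an occurrence of `α` starting inside `γ` lies inside `γ α`, hence is one in `z`
  · exact hmin g ((prefix_of_prefix_length_le hg hγy (by simpa using hg_short)).trans hγ)
  · exact Or.inr (hγu.trans (prefix_of_prefix_length_le ((prefix_append _ _).trans hγy)
      ((prefix_append _ _).trans hg) (by omega)))

end IsLeastNonemptyPa

/-- The second conjunct says that `‾u` is the least nonempty element of `S_‾α(z)`. -/
def IsLeastNonemptyPaSa (bar : S → S) (a u z : List S) : Prop :=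
  IsLeastNonemptyPa a u z ∧ IsLeastNonemptyPa a u (comp bar z)

lemma isLeastNonemptyPaSa_comp (hbar : Function.Involutive bar) {a u z : List S}
    (h : IsLeastNonemptyPaSa bar a u z) : IsLeastNonemptyPaSa bar a u (comp bar z) :=
  ⟨h.2, (comp_comp hbar z).symm ▸ h.1⟩

namespace IsLeastNonemptyPaSa

variable {a u z z' : List S}

lemma of_RH (hbar : Function.Involutive bar) (hz : IsLeastNonemptyPaSa bar a u z)
    (h : RH bar a z z') : IsLeastNonemptyPaSa bar a u z' := by
  obtain ⟨γ, β, hzγ, rfl⟩ := h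
  have hγ : γ ++ a <+: z := ⟨β ++ comp bar a, by rw [hzγ]; simp⟩
  rcases hz.1.2.2 γ hγ with rfl | hγu
  · rwa [comp, map_nil, reverse_nil, append_nil]
  refine ⟨hz.1.append _, ?_⟩
  rw [comp_append, comp_comp hbar]
  exact hz.1.prepend hγ hγu hz.2.1

lemma of_LH (hbar : Function.Involutive bar) (hz : IsLeastNonemptyPaSa bar a u z)
    (h : LH bar a z z') : IsLeastNonemptyPaSa bar a u z' := by
  obtain ⟨γ, β, hzγ, rfl⟩ := h
  have hRH : RH bar a (comp bar z) (comp bar (γ ++ z)) := by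
    refine ⟨γ, comp bar β, ?_, comp_append _ _⟩
    simp only [hzγ, comp_append, comp_comp hbar, append_assoc]
  simpa only [comp_comp hbar] using
    isLeastNonemptyPaSa_comp hbar ((isLeastNonemptyPaSa_comp hbar hz).of_RH hbar hRH)

lemma of_mem_HCstar (hbar : Function.Involutive bar) {w : List S}
    (hw : IsLeastNonemptyPaSa bar a u w) (hz : z ∈ HCstar bar a w) :
    IsLeastNonemptyPaSa bar a u z := by
  induction hz with
  | refl => exact hw
  | tail _ hstep ih => exact hstep.elim (ih.of_RH hbar) (ih.of_LH hbar)

lemma prefix_suffix (hbar : Function.Involutive bar) (h : IsLeastNonemptyPaSa bar a u z) :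
    u ++ a <+: z ∧ comp bar (u ++ a) <:+ z :=
  ⟨h.1.2.1, (prefix_comp_iff hbar).mp h.2.2.1⟩

end IsLeastNonemptyPaSa

variable [DecidableEq S]

theorem stmt16 (bar : S → S) (hbar : Function.Involutive bar)
    (a w : List S)
    (hp : a <+: w) (hs : comp bar a <:+ w)
    (m : ℕ) (u : Fin m → List S)
    (huchain : ∀ i j : Fin m, i < j → u i <+: u j ∧ u i ≠ u j)
    (hPu : Pa a w = Set.range u)
    (n : ℕ) (v : Fin n → List S)
    (hvchain : ∀ i j : Fin n, i < j → comp bar (v i) <:+ comp bar (v j) ∧ v i ≠ v j)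
    (hSv : Sa bar a w = Set.range (fun i => comp bar (v i)))
    (hm : 2 ≤ m) (hn : 2 ≤ n)
    (huv : u ⟨1, by omega⟩ = v ⟨1, by omega⟩) :
    ∀ z ∈ HCstar bar a w,
      (u ⟨1, by omega⟩ ++ a) <+: z ∧ comp bar (u ⟨1, by omega⟩ ++ a) <:+ z := by
  intro z hz
  have hw : IsLeastNonemptyPaSa bar a (u ⟨1, by omega⟩) w := by
    refine ⟨isLeastNonemptyPa_of_range u (fun i j h => (huchain i j h).1) hPu hp _, ?_⟩
    rw [huv]
    refine isLeastNonemptyPa_of_range v (fun i j h => ?_) (Pa_comp_eq_range hbar hSv) ?_ _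
    · simpa only [comp_comp hbar] using (prefix_comp_iff hbar).mpr (hvchain i j h).1
    · exact (prefix_comp_iff hbar).mpr hs
  exact (hw.of_mem_HCstar hbar hz).prefix_suffix hbar

end Hairpin
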